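/- There is an absolute constant C such that for all f, g ∈ L²(ℝ) and all λ > 0, |{ x ∈ ℝ : M_D(f,g)(x) > λ }| ≤ C · λ^{-1} · ‖f‖_{L²(ℝ)} ‖g‖_{L²(ℝ)}. In other words, M_D maps L²(ℝ) × L²(ℝ) to L^{1,∞}(ℝ). -/

import Mathlib

/-!
On `P_{x,l,w}` the vertical fibres have length `2w`, while the horizontal fibres have length at
most `2 min(l, w)` and lie over `[x - l - w, x + l + w]`. Since `min(l, w) (l + w) ≤ 2 l w`,
Cauchy–Schwarz gives `M_D(f,g)² ≤ 2 M(|f|²) M(|g|²)` pointwise, where `M` is the centred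
Hardy–Littlewood maximal operator. The set where `M(|f|²) M(|g|²)` exceeds a level `t²` is
covered by `{M(|f|²) > a} ∪ {M(|g|²) > b}` with `ab = t²`, and choosing `a / b = ‖f‖₂ / ‖g‖₂`
balances the weak type `(1,1)` bounds of `M` (Vitali covering) for the two pieces.
-/

open MeasureTheory Set Real
open scoped ENNReal NNReal

/-- The parallelogram `P_{x,l,w}` with vertices `(x±l, x±l±w)`: its two
vertical sides have length `2w` and its other two sides are parallel to the
diagonal `D = {(t,t) : t ∈ ℝ}`. -/
def para (x l w : ℝ) : Set (ℝ × ℝ) :=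
  {p | |p.1 - x| ≤ l ∧ |p.2 - p.1| ≤ w}

/-- The diagonal bilinear maximal operator
`M_D(f,g)(x) = sup_{l,w > 0} (1/|P_{x,l,w}|) ∫_{P_{x,l,w}} |f(y) g(z)| dy dz`. -/
noncomputable def MD (f g : ℝ → ℂ) (x : ℝ) : ℝ≥0∞ :=
  ⨆ (l : ℝ) (_ : 0 < l) (w : ℝ) (_ : 0 < w),
    (∫⁻ p in para x l w, (‖f p.1 * g p.2‖₊ : ℝ≥0∞)) / volume (para x l w)

open Metric

section

variable {α : Type*} [MeasurableSpace α] {μ : Measure α}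

theorem ENNReal.lintegral_mul_sq_le_sq_mul_sq {u v : α → ℝ≥0∞} (hu : AEMeasurable u μ)
    (hv : AEMeasurable v μ) :
    (∫⁻ a, u a * v a ∂μ) ^ 2 ≤ (∫⁻ a, u a ^ 2 ∂μ) * ∫⁻ a, v a ^ 2 ∂μ := by
  have h := ENNReal.lintegral_mul_le_Lp_mul_Lq μ Real.HolderConjugate.two_two hu hv
  simp only [Pi.mul_apply, ENNReal.rpow_two] at h
  calc (∫⁻ a, u a * v a ∂μ) ^ 2
      ≤ ((∫⁻ a, u a ^ 2 ∂μ) ^ (1 / 2 : ℝ) * (∫⁻ a, v a ^ 2 ∂μ) ^ (1 / 2 : ℝ)) ^ 2 := by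
        gcongr
    _ = (∫⁻ a, u a ^ 2 ∂μ) * ∫⁻ a, v a ^ 2 ∂μ := by
      simp only [mul_pow, ← ENNReal.rpow_two, ← ENNReal.rpow_mul]
      norm_num

theorem lintegral_enorm_sq_eq_eLpNorm_sq {E : Type*} [NormedAddCommGroup E] (f : α → E) :
    ∫⁻ a, ‖f a‖ₑ ^ 2 ∂μ = eLpNorm f 2 μ ^ 2 := by
  simpa using (eLpNorm_nnreal_pow_eq_lintegral (μ := μ) (f := f) (p := 2) two_ne_zero).symm

theorem measure_setOf_pos_eq_zero {F : α → ℝ≥0∞} (hF : ∀ β ≠ 0, μ {x | β < F x} = 0) :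
    μ {x | 0 < F x} = 0 := by
  refine measure_mono_null (fun x hx => ?_)
    (measure_iUnion_null fun n : ℕ => hF (n : ℝ≥0∞)⁻¹ (ENNReal.inv_ne_zero.2 (by simp)))
  obtain ⟨n, hn⟩ := ENNReal.exists_inv_nat_lt (ne_of_gt hx)
  exact mem_iUnion.2 ⟨n, hn⟩

theorem measure_lt_mul_eq_zero {F G : α → ℝ≥0∞} (hF : ∀ β ≠ 0, μ {x | β < F x} = 0)
    (t : ℝ≥0∞) :
    μ {x | t < F x * G x} = 0 :=
  measure_mono_null (fun x (hx : t < F x * G x) => show 0 < F x from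
      pos_iff_ne_zero.2 fun h => by simp [h] at hx)
    (measure_setOf_pos_eq_zero hF)

theorem measure_sq_lt_mul_le {F G : α → ℝ≥0∞} {c a b t : ℝ≥0∞}
    (hF : ∀ β ≠ 0, μ {x | β < F x} ≤ c * a ^ 2 / β)
    (hG : ∀ β ≠ 0, μ {x | β < G x} ≤ c * b ^ 2 / β)
    (hc : c ≠ ∞) (ha : a ≠ ∞) (hb : b ≠ ∞) (ht : t ≠ 0) (ht' : t ≠ ∞) :
    μ {x | t ^ 2 < F x * G x} ≤ 2 * c * a * b / t := by
  rcases eq_or_ne a 0 with rfl | ha0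
  · exact (measure_lt_mul_eq_zero (fun β hβ =>
      nonpos_iff_eq_zero.1 ((hF β hβ).trans_eq (by simp))) _).trans_le zero_le
  rcases eq_or_ne b 0 with rfl | hb0
  · simp_rw [mul_comm (F _)]
    exact (measure_lt_mul_eq_zero (fun β hβ =>
      nonpos_iff_eq_zero.1 ((hG β hβ).trans_eq (by simp))) _).trans_le zero_le
  lift a to ℝ≥0 using ha
  lift b to ℝ≥0 using hb
  lift c to ℝ≥0 using hc
  lift t to ℝ≥0 using ht'
  simp only [ne_eq, ENNReal.coe_eq_zero] at ha0 hb0 ht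
  -- These levels multiply to `t²` and make the two weak-type bounds equal.
  have hp : t * a / b ≠ 0 := by positivity
  have hq : t * b / a ≠ 0 := by positivity
  have hsub : {x | (t : ℝ≥0∞) ^ 2 < F x * G x} ⊆
      {x | ((t * a / b : ℝ≥0) : ℝ≥0∞) < F x} ∪ {x | ((t * b / a : ℝ≥0) : ℝ≥0∞) < G x} := by
    intro x hx
    by_contra hcon
    simp only [mem_union, mem_ofPred_eq, not_or, not_lt] at hcon
    have hpq : ((t * a / b : ℝ≥0) : ℝ≥0∞) * ((t * b / a : ℝ≥0) : ℝ≥0∞) = (t : ℝ≥0∞) ^ 2 := by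
      rw [← ENNReal.coe_mul, ← ENNReal.coe_pow]
      congr 1
      field_simp
    exact (mem_ofPred_eq ▸ hx).not_ge (hpq ▸ mul_le_mul' hcon.1 hcon.2)
  calc μ {x | (t : ℝ≥0∞) ^ 2 < F x * G x}
      ≤ μ {x | ((t * a / b : ℝ≥0) : ℝ≥0∞) < F x} +
          μ {x | ((t * b / a : ℝ≥0) : ℝ≥0∞) < G x} :=
        (measure_mono hsub).trans (measure_union_le _ _)
    _ ≤ ↑(c * a ^ 2) / ↑(t * a / b) + ↑(c * b ^ 2) / ↑(t * b / a) := by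
        gcongr
        · simpa using hF _ (by simpa using hp)
        · simpa using hG _ (by simpa using hq)
    _ = 2 * c * a * b / t := by
        rw [← ENNReal.coe_div hp, ← ENNReal.coe_div hq, ← ENNReal.coe_add,
          ← ENNReal.coe_ofNat, ← ENNReal.coe_mul, ← ENNReal.coe_mul, ← ENNReal.coe_mul,
          ← ENNReal.coe_div ht]
        congr 1
        field_simp
        ring

variable {β : Type*} [MeasurableSpace β] {ν : Measure β}

theorem setLIntegral_comp_fst_le {S : Set (α × β)} (hS : MeasurableSet S)
    (u : α → ℝ≥0∞) :
    ∫⁻ p in S, u p.1 ∂μ.prod ν ≤ ∫⁻ y, u y * ν (Prod.mk y ⁻¹' S) ∂μ := by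
  rw [← lintegral_indicator hS]
  refine (lintegral_prod_le _).trans (lintegral_mono fun y => ?_)
  rw [← lintegral_indicator_const (measurable_prodMk_left hS)]
  rfl

theorem setLIntegral_comp_snd_le [SFinite μ] [SFinite ν] {S : Set (α × β)}
    (hS : MeasurableSet S) (v : β → ℝ≥0∞) :
    ∫⁻ p in S, v p.2 ∂μ.prod ν ≤ ∫⁻ z, v z * μ ((·, z) ⁻¹' S) ∂ν := by
  rw [← lintegral_indicator hS, ← lintegral_prod_swap]
  refine (lintegral_prod_le _).trans (lintegral_mono fun z => ?_)
  rw [← lintegral_indicator_const (measurable_prodMk_right hS)]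
  rfl

end

theorem exists_countable_disjoint_closedBall_cover {α : Type*} [PseudoMetricSpace α]
    [TopologicalSpace.SeparableSpace α] (E : Set α) {ρ : α → ℝ} {R : ℝ}
    (hρ0 : ∀ x ∈ E, 0 < ρ x) (hρR : ∀ x ∈ E, ρ x ≤ R) :
    ∃ u ⊆ E, u.Countable ∧ u.PairwiseDisjoint (fun b => closedBall b (ρ b)) ∧
      E ⊆ ⋃ b ∈ u, closedBall b (4 * ρ b) := by
  obtain ⟨u, huE, hdisj, hcover⟩ :=
    Vitali.exists_disjoint_subfamily_covering_enlargement_closedBall E id ρ R hρR 4 (by norm_num)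
  refine ⟨u, huE, hdisj.countable_of_nonempty_interior fun b hb => ?_, hdisj, fun x hx => ?_⟩
  · exact (nonempty_ball.2 (hρ0 b (huE hb))).mono ball_subset_interior_closedBall
  · obtain ⟨b, hbu, hsub⟩ := hcover x hx
    exact mem_biUnion hbu (hsub (mem_closedBall_self (hρ0 x hx).le))

noncomputable def maximalFunction (h : ℝ → ℝ≥0∞) (x : ℝ) : ℝ≥0∞ :=
  ⨆ (r : ℝ) (_ : 0 < r), (∫⁻ z in closedBall x r, h z) / volume (closedBall x r)

theorem setLIntegral_closedBall_le_maximalFunction (h : ℝ → ℝ≥0∞) (x : ℝ) {r : ℝ}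
    (hr : 0 < r) :
    ∫⁻ z in closedBall x r, h z ≤ ENNReal.ofReal (2 * r) * maximalFunction h x := by
  have hV : volume (closedBall x r) = ENNReal.ofReal (2 * r) := Real.volume_closedBall x r
  rw [mul_comm, ← ENNReal.div_le_iff (by simpa using hr) ENNReal.ofReal_ne_top, ← hV]
  exact le_iSup₂_of_le (f := fun r _ => (∫⁻ z in closedBall x r, h z) /
    volume (closedBall x r)) r hr le_rfl

theorem exists_lt_setLIntegral_of_lt_maximalFunction {h : ℝ → ℝ≥0∞} {x : ℝ} {β : ℝ≥0∞}
    (hx : β < maximalFunction h x) :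
    ∃ r, 0 < r ∧ β * ENNReal.ofReal (2 * r) < ∫⁻ z in closedBall x r, h z := by
  simp only [maximalFunction, lt_iSup_iff] at hx
  obtain ⟨r, hr, hlt⟩ := hx
  exact ⟨r, hr, Real.volume_closedBall x r ▸ ENNReal.mul_lt_of_lt_div hlt⟩

theorem volume_lt_maximalFunction_le (h : ℝ → ℝ≥0∞) {β : ℝ≥0∞} (hβ : β ≠ 0) :
    volume {x | β < maximalFunction h x} ≤ 4 * (∫⁻ z, h z) / β := by
  rcases eq_or_ne β ∞ with rfl | hβ'
  · simp only [not_top_lt, ofPred_false, measure_empty, zero_le]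
  set I := ∫⁻ z, h z
  rcases eq_or_ne I ∞ with hI | hI
  · simp [hI, ENNReal.top_div_of_ne_top hβ']
  set E := {x | β < maximalFunction h x}
  choose! ρ hρ0 hρ using fun x (hx : x ∈ E) =>
    exists_lt_setLIntegral_of_lt_maximalFunction hx
  have hρI : ∀ x ∈ E, ENNReal.ofReal (2 * ρ x) ≤ (∫⁻ z in closedBall x (ρ x), h z) / β :=
    fun x hx =>
      (ENNReal.le_div_iff_mul_le (.inl hβ) (.inl hβ')).2 (mul_comm β _ ▸ (hρ x hx).le)
  have hρR : ∀ x ∈ E, ρ x ≤ (I / β).toReal := fun x hx => by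
    have := (ENNReal.ofReal_le_iff_le_toReal (ENNReal.div_ne_top hI hβ)).1
      ((hρI x hx).trans (by gcongr; exact setLIntegral_le_lintegral _ _))
    linarith [hρ0 x hx]
  obtain ⟨u, huE, hu, hdisj, hcover⟩ := exists_countable_disjoint_closedBall_cover E hρ0 hρR
  calc volume E ≤ ∑' b : u, volume (closedBall (b : ℝ) (4 * ρ b)) :=
        (measure_mono hcover).trans (measure_biUnion_le _ hu _)
    _ = ∑' b : u, 4 * ENNReal.ofReal (2 * ρ b) := by
        refine tsum_congr fun b => ?_
        rw [Real.volume_closedBall, mul_left_comm, ENNReal.ofReal_mul (by norm_num)]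
        norm_num
    _ ≤ ∑' b : u, 4 * ((∫⁻ z in closedBall (b : ℝ) (ρ b), h z) / β) := by
        gcongr with b
        exact hρI b (huE b.2)
    _ = 4 * (∫⁻ z in ⋃ b ∈ u, closedBall b (ρ b), h z) / β := by
        rw [lintegral_biUnion hu (fun _ _ => measurableSet_closedBall) hdisj, mul_div_assoc]
        simp only [div_eq_mul_inv, ENNReal.tsum_mul_left, ENNReal.tsum_mul_right]
    _ ≤ 4 * I / β := by
        gcongr
        exact setLIntegral_le_lintegral _ _

theorem volume_lt_mul_maximalFunction_le (h : ℝ → ℝ≥0∞) {k β : ℝ≥0∞} (hk : k ≠ ∞)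
    (hβ : β ≠ 0) :
    volume {x | β < k * maximalFunction h x} ≤ 4 * k * (∫⁻ z, h z) / β := by
  rcases eq_or_ne k 0 with rfl | hk0
  · simp
  have hset : {x | β < k * maximalFunction h x} = {x | β / k < maximalFunction h x} := by
    ext x
    rw [mem_ofPred_eq, mem_ofPred_eq, ENNReal.div_lt_iff (.inl hk0) (.inl hk), mul_comm]
  rw [hset]
  refine (volume_lt_maximalFunction_le h (ENNReal.div_ne_zero.2 ⟨hβ, hk⟩)).trans_eq ?_
  simp only [div_eq_mul_inv, ENNReal.mul_inv (.inl hβ) (.inr (ENNReal.inv_ne_zero.2 hk)), inv_inv]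
  ring

theorem volume_lt_mul_maximalFunction_enorm_sq_le {E : Type*} [NormedAddCommGroup E]
    (φ : ℝ → E) {k β : ℝ≥0∞} (hk : k ≠ ∞) (hβ : β ≠ 0) :
    volume {x | β < k * maximalFunction (‖φ ·‖ₑ ^ 2) x} ≤
      4 * k * eLpNorm φ 2 volume ^ 2 / β := by
  rw [← lintegral_enorm_sq_eq_eLpNorm_sq]
  exact volume_lt_mul_maximalFunction_le _ hk hβ

theorem measurableSet_para (x l w : ℝ) : MeasurableSet (para x l w) :=
  show MeasurableSet ({p : ℝ × ℝ | |p.1 - x| ≤ l} ∩ {p | |p.2 - p.1| ≤ w}) from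
    (measurableSet_le (by fun_prop) (by fun_prop)).inter
      (measurableSet_le (by fun_prop) (by fun_prop))

theorem volume_para_fiber_fst (x l w y : ℝ) :
    volume (Prod.mk y ⁻¹' para x l w) =
      (closedBall x l).indicator (fun _ => ENNReal.ofReal (2 * w)) y := by
  by_cases hy : y ∈ closedBall x l
  · rw [indicator_of_mem hy, ← Real.volume_closedBall y w]
    congr 1
    ext z
    simp_all [para, Real.dist_eq]
  · rw [indicator_of_notMem hy]
    convert measure_empty (μ := volume)
    ext z
    simp_all [para, Real.dist_eq]

theorem volume_para_fiber_snd_le (x l w z : ℝ) :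
    volume ((·, z) ⁻¹' para x l w) ≤
      (closedBall x (l + w)).indicator (fun _ => ENNReal.ofReal (2 * min l w)) z := by
  have hfiber : (·, z) ⁻¹' para x l w = closedBall x l ∩ closedBall z w := by
    ext y
    simp [para, Real.dist_eq, abs_sub_comm z y]
  by_cases hz : z ∈ closedBall x (l + w)
  · rw [indicator_of_mem hz, hfiber, mul_min_of_nonneg _ _ zero_le_two, ENNReal.ofReal_min,
      ← Real.volume_closedBall, ← Real.volume_closedBall]
    exact le_min (measure_mono inter_subset_left) (measure_mono inter_subset_right)
  · rw [indicator_of_notMem hz, hfiber, nonpos_iff_eq_zero]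
    convert measure_empty (μ := volume)
    refine eq_empty_of_forall_notMem fun y ⟨hyx, hyz⟩ => hz ?_
    simp only [mem_closedBall, Real.dist_eq] at *
    linarith [abs_sub_le z y x, abs_sub_comm y z]

theorem volume_para (x l w : ℝ) :
    volume (para x l w) = ENNReal.ofReal (2 * l) * ENNReal.ofReal (2 * w) := by
  rw [Measure.volume_eq_prod, Measure.prod_apply (measurableSet_para x l w)]
  simp_rw [volume_para_fiber_fst]
  rw [lintegral_indicator_const measurableSet_closedBall, Real.volume_closedBall, mul_comm]

theorem setLIntegral_para_comp_fst_le (x l w : ℝ) (u : ℝ → ℝ≥0∞) :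
    ∫⁻ p in para x l w, u p.1 ≤ ENNReal.ofReal (2 * w) * ∫⁻ y in closedBall x l, u y := by
  rw [Measure.volume_eq_prod]
  refine (setLIntegral_comp_fst_le (measurableSet_para x l w) u).trans_eq ?_
  rw [← lintegral_const_mul' _ _ ENNReal.ofReal_ne_top,
    ← lintegral_indicator measurableSet_closedBall]
  refine lintegral_congr fun y => ?_
  rw [volume_para_fiber_fst]
  by_cases hy : y ∈ closedBall x l <;> simp [hy, mul_comm]

theorem setLIntegral_para_comp_snd_le (x l w : ℝ) (v : ℝ → ℝ≥0∞) :
    ∫⁻ p in para x l w, v p.2 ≤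
      ENNReal.ofReal (2 * min l w) * ∫⁻ z in closedBall x (l + w), v z := by
  rw [Measure.volume_eq_prod]
  refine (setLIntegral_comp_snd_le (measurableSet_para x l w) v).trans ?_
  rw [← lintegral_const_mul' _ _ ENNReal.ofReal_ne_top,
    ← lintegral_indicator measurableSet_closedBall]
  refine lintegral_mono fun z => ?_
  grw [volume_para_fiber_snd_le x l w z]
  by_cases hz : z ∈ closedBall x (l + w) <;> simp [hz, mul_comm]

theorem sq_setLIntegral_para_le {u v : ℝ → ℝ≥0∞} (hu : AEMeasurable u) (hv : AEMeasurable v)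
    (x : ℝ) {l w : ℝ} (hl : 0 < l) (hw : 0 < w) :
    (∫⁻ p in para x l w, u p.1 * v p.2) ^ 2 ≤
      2 * maximalFunction (u · ^ 2) x * maximalFunction (v · ^ 2) x *
        volume (para x l w) ^ 2 := by
  set Mu := maximalFunction (u · ^ 2) x
  set Mv := maximalFunction (v · ^ 2) x
  have hu' : AEMeasurable (fun p : ℝ × ℝ => u p.1) (volume.restrict (para x l w)) :=
    (hu.comp_quasiMeasurePreserving Measure.quasiMeasurePreserving_fst).restrict
  have hv' : AEMeasurable (fun p : ℝ × ℝ => v p.2) (volume.restrict (para x l w)) :=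
    (hv.comp_quasiMeasurePreserving Measure.quasiMeasurePreserving_snd).restrict
  have hmin : 2 * w * (2 * l) * (2 * min l w) * (2 * (l + w)) ≤ 2 * (2 * l * (2 * w)) ^ 2 := by
    rcases le_total l w with h | h
    · rw [min_eq_left h]; nlinarith [mul_pos hl hw]
    · rw [min_eq_right h]; nlinarith [mul_pos hl hw]
  calc (∫⁻ p in para x l w, u p.1 * v p.2) ^ 2
      ≤ (∫⁻ p in para x l w, u p.1 ^ 2) * ∫⁻ p in para x l w, v p.2 ^ 2 :=
        ENNReal.lintegral_mul_sq_le_sq_mul_sq hu' hv'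
    _ ≤ (ENNReal.ofReal (2 * w) * ∫⁻ y in closedBall x l, u y ^ 2) *
          (ENNReal.ofReal (2 * min l w) * ∫⁻ z in closedBall x (l + w), v z ^ 2) := by
        gcongr
        exacts [setLIntegral_para_comp_fst_le x l w _, setLIntegral_para_comp_snd_le x l w _]
    _ ≤ (ENNReal.ofReal (2 * w) * (ENNReal.ofReal (2 * l) * Mu)) *
          (ENNReal.ofReal (2 * min l w) * (ENNReal.ofReal (2 * (l + w)) * Mv)) := by
        gcongr
        exacts [setLIntegral_closedBall_le_maximalFunction _ x hl,
          setLIntegral_closedBall_le_maximalFunction _ x (add_pos hl hw)]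
    _ = ENNReal.ofReal (2 * w) * ENNReal.ofReal (2 * l) * ENNReal.ofReal (2 * min l w) *
          ENNReal.ofReal (2 * (l + w)) * Mu * Mv := by ring
    _ ≤ ENNReal.ofReal (2 * (2 * l * (2 * w)) ^ 2) * Mu * Mv := by
        rw [← ENNReal.ofReal_mul (by positivity : (0 : ℝ) ≤ 2 * w),
          ← ENNReal.ofReal_mul (by positivity : (0 : ℝ) ≤ 2 * w * (2 * l)),
          ← ENNReal.ofReal_mul (by positivity : (0 : ℝ) ≤ 2 * w * (2 * l) * (2 * min l w))]
        gcongr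
    _ = 2 * Mu * Mv * volume (para x l w) ^ 2 := by
        rw [volume_para, ENNReal.ofReal_mul zero_le_two, ENNReal.ofReal_pow (by positivity),
          ENNReal.ofReal_mul (by positivity), ENNReal.ofReal_ofNat]
        ring

theorem MD_sq_le {f g : ℝ → ℂ} (hf : AEStronglyMeasurable f) (hg : AEStronglyMeasurable g)
    (x : ℝ) :
    MD f g x ^ 2 ≤
      2 * maximalFunction (‖f ·‖ₑ ^ 2) x * maximalFunction (‖g ·‖ₑ ^ 2) x := by
  simp only [MD, ENNReal.iSup_pow_of_ne_zero two_ne_zero]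
  refine iSup₂_le fun l hl => iSup₂_le fun w hw => ?_
  rw [div_eq_mul_inv, mul_pow, ← ENNReal.inv_pow, ← div_eq_mul_inv]
  refine ENNReal.div_le_of_le_mul ?_
  simpa only [enorm_eq_nnnorm, nnnorm_mul, ENNReal.coe_mul] using
    sq_setLIntegral_para_le hf.enorm hg.enorm x hl hw

theorem setOf_lt_MD_subset {f g : ℝ → ℂ} (hf : AEStronglyMeasurable f)
    (hg : AEStronglyMeasurable g) (t : ℝ≥0∞) :
    {x | t < MD f g x} ⊆
      {x | t ^ 2 < 2 * maximalFunction (‖f ·‖ₑ ^ 2) x * (2 * maximalFunction (‖g ·‖ₑ ^ 2) x)} :=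
  fun x hx => calc
    t ^ 2 < MD f g x ^ 2 := by gcongr; exact hx
    _ ≤ 2 * maximalFunction (‖f ·‖ₑ ^ 2) x * maximalFunction (‖g ·‖ₑ ^ 2) x := MD_sq_le hf hg x
    _ ≤ _ := by
      gcongr
      exact le_mul_of_one_le_left zero_le (by norm_num : (1 : ℝ≥0∞) ≤ 2)

/-- The diagonal bilinear maximal operator `M_D` maps `L²(ℝ) × L²(ℝ)` to
`L^{1,∞}(ℝ)`. -/
theorem MD_weak_type :
    ∃ C : ℝ, 0 < C ∧
      ∀ f g : ℝ → ℂ, MemLp f 2 volume → MemLp g 2 volume →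
        ∀ lam : ℝ, 0 < lam →
          volume {x : ℝ | ENNReal.ofReal lam < MD f g x} ≤
            ENNReal.ofReal (C / lam) *
              (eLpNorm f 2 volume * eLpNorm g 2 volume) := by
  refine ⟨16, by norm_num, fun f g hf hg lam hlam => ?_⟩
  calc volume {x | ENNReal.ofReal lam < MD f g x}
      ≤ 2 * (4 * 2) * eLpNorm f 2 volume * eLpNorm g 2 volume / ENNReal.ofReal lam :=
        (measure_mono (setOf_lt_MD_subset hf.1 hg.1 _)).trans <| measure_sq_lt_mul_le
          (fun _ => volume_lt_mul_maximalFunction_enorm_sq_le f ENNReal.ofNat_ne_top)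
          (fun _ => volume_lt_mul_maximalFunction_enorm_sq_le g ENNReal.ofNat_ne_top)
          (by norm_num) hf.eLpNorm_ne_top hg.eLpNorm_ne_top (by simpa using hlam)
          ENNReal.ofReal_ne_top
    _ = ENNReal.ofReal (16 / lam) * (eLpNorm f 2 volume * eLpNorm g 2 volume) := by
        rw [ENNReal.ofReal_div_of_pos hlam, ENNReal.div_eq_inv_mul, ENNReal.div_eq_inv_mul]
        norm_num
        ring
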